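/- Let X be a complete C¹ vector field on a Riemannian manifold M and let Λ be an R-chain-recurrent closed invariant set. If X has the rescaled-shadowing property on Λ, then Λ is non-wandering for the restricted flow. -/

import Mathlib

open Set Filter Metric

variable {M : Type*} [MetricSpace M]

/-- A continuous flow on `M`. -/
def IsFlow (φ : ℝ → M → M) : Prop :=
  Continuous (fun p : ℝ × M => φ p.1 p.2) ∧ (∀ x, φ 0 x = x) ∧
    ∀ s t : ℝ, ∀ x, φ (s + t) x = φ s (φ t x)

/-- A fixed point (singularity) of the flow. -/
def IsFixed (φ : ℝ → M → M) (x : M) : Prop := ∀ t, φ t x = x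

/-- An invariant set. -/
def Invariant (φ : ℝ → M → M) (Λ : Set M) : Prop := ∀ t : ℝ, ∀ x ∈ Λ, φ t x ∈ Λ

/-- A reparametrization: an increasing homeomorphism of `ℝ` fixing `0`. -/
def IsRep (h : ℝ → ℝ) : Prop :=
  StrictMono h ∧ Continuous h ∧ Function.Surjective h ∧ h 0 = 0

/-- A (bi-infinite) `δ`-`T`-pseudo-orbit. -/
def IsPseudoOrbit (φ : ℝ → M → M) (δ T : ℝ) (x : ℤ → M) (t : ℤ → ℝ) : Prop :=
  ∀ i : ℤ, T ≤ t i ∧ dist (φ (t i) (x i)) (x (i + 1)) ≤ δ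

/-- The partial sums `s` associated with the times `t` of a pseudo-orbit. -/
def PartialSums (t s : ℤ → ℝ) : Prop := s 0 = 0 ∧ ∀ i : ℤ, s (i + 1) = s i + t i

/-- `y` ε-shadows the pseudo-orbit `(x, t)` (with partial sums `s`) via `h`. -/
def ShadowsWith (φ : ℝ → M → M) (ε : ℝ) (x : ℤ → M) (s : ℤ → ℝ) (y : M) (h : ℝ → ℝ) : Prop :=
  ∀ i : ℤ, ∀ τ ∈ Set.Ico (s i) (s (i + 1)), dist (φ (h τ) y) (φ (τ - s i) (x i)) ≤ ε

/-- The shadowing property on `Λ`. -/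
def ShadowingOn (φ : ℝ → M → M) (Λ : Set M) : Prop :=
  ∀ ε > (0 : ℝ), ∃ δ > (0 : ℝ), ∀ (x : ℤ → M) (t s : ℤ → ℝ),
    (∀ i, x i ∈ Λ) → IsPseudoOrbit φ δ 1 x t → PartialSums t s →
    ∃ y ∈ Λ, ∃ h : ℝ → ℝ, IsRep h ∧ ShadowsWith φ ε x s y h

/-- `p` is chain-recurrent in `Λ`: finite ε-1-pseudo-orbits from `p` back to `p`. -/
def ChainRecurrentPt (φ : ℝ → M → M) (Λ : Set M) (p : M) : Prop :=
  ∀ ε > (0 : ℝ), ∃ N : ℕ, 0 < N ∧ ∃ (x : ℕ → M) (t : ℕ → ℝ),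
    x 0 = p ∧ x N = p ∧ (∀ i ≤ N, x i ∈ Λ) ∧
    ∀ i < N, 1 ≤ t i ∧ dist (φ (t i) (x i)) (x (i + 1)) ≤ ε

def ChainRecurrentSet (φ : ℝ → M → M) (Λ : Set M) : Prop :=
  ∀ p ∈ Λ, ChainRecurrentPt φ Λ p

/-- `p` is non-wandering for the flow restricted to `Λ`. -/
def NonWanderingPt (φ : ℝ → M → M) (Λ : Set M) (p : M) : Prop :=
  ∀ ε > (0 : ℝ), ∀ T > (0 : ℝ), ∃ y ∈ Λ, dist y p ≤ ε ∧ ∃ t > T, dist (φ t y) p ≤ ε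

/-- The stable set of a point `σ`. -/
def Ws (φ : ℝ → M → M) (σ : M) : Set M :=
  {x | Tendsto (fun t => φ t x) atTop (nhds σ)}

/-- The unstable set of a point `σ`. -/
def Wu (φ : ℝ → M → M) (σ : M) : Set M :=
  {x | Tendsto (fun t => φ t x) atBot (nhds σ)}

/-- The orbit of a point. -/
def orbitOf (φ : ℝ → M → M) (p : M) : Set M := Set.range fun t => φ t p

/-- A homoclinic point attached to the singularity `σ`. -/
def HomoclinicPt (φ : ℝ → M → M) (σ p : M) : Prop :=
  ¬ IsFixed φ p ∧ p ∈ Ws φ σ ∩ Wu φ σ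

/-- `σ` is attached to `Λ`: accumulated by regular (non-fixed) points of `Λ`. -/
def Attached (φ : ℝ → M → M) (Λ : Set M) (σ : M) : Prop :=
  ∀ ε > (0 : ℝ), ∃ p ∈ Λ, dist p σ ≤ ε ∧ ¬ IsFixed φ p

/-- `e ∈ C⁰_X(M)`: continuous, nonnegative, vanishing exactly on the singularities. -/
def CXfun {M : Type*} [MetricSpace M] (φ : ℝ → M → M) (e : M → ℝ) : Prop :=
  Continuous e ∧ ∀ x, 0 ≤ e x ∧ (e x = 0 ↔ IsFixed φ x)

/-- A (bi-infinite) `e`-`T`-pseudo-orbit: jumps bounded by `e (x i)`. -/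
def IsRescaledPseudoOrbit {M : Type*} [MetricSpace M] (φ : ℝ → M → M) (e : M → ℝ)
    (T : ℝ) (x : ℤ → M) (t : ℤ → ℝ) : Prop :=
  ∀ i : ℤ, T ≤ t i ∧ dist (φ (t i) (x i)) (x (i + 1)) ≤ e (x i)

/-- `y` `e`-shadows the pseudo-orbit `(x, t)` (with partial sums `s`) via `h`. -/
def RescaledShadowsWith {M : Type*} [MetricSpace M] (φ : ℝ → M → M) (e : M → ℝ)
    (x : ℤ → M) (s : ℤ → ℝ) (y : M) (h : ℝ → ℝ) : Prop :=
  ∀ i : ℤ, ∀ τ ∈ Set.Ico (s i) (s (i + 1)),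
    dist (φ (h τ) y) (φ (τ - s i) (x i)) ≤ e (φ (τ - s i) (x i))

/-- The rescaled-shadowing property on `Λ`. -/
def RescaledShadowingOn {M : Type*} [MetricSpace M] (φ : ℝ → M → M) (Λ : Set M) : Prop :=
  ∀ e : M → ℝ, CXfun φ e → ∃ d : M → ℝ, CXfun φ d ∧
    ∀ (x : ℤ → M) (t s : ℤ → ℝ), (∀ i, x i ∈ Λ) →
      IsRescaledPseudoOrbit φ d 1 x t → PartialSums t s →
      ∃ y ∈ Λ, ∃ h : ℝ → ℝ, IsRep h ∧ RescaledShadowsWith φ e x s y h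

/-- `Λ` is R-chain-recurrent: every point admits finite `e`-`1`-pseudo-orbits from
itself to itself, for every `e ∈ C⁰_X(M)`. -/
def RChainRecurrentSet {M : Type*} [MetricSpace M] (φ : ℝ → M → M) (Λ : Set M) : Prop :=
  ∀ p ∈ Λ, ∀ e : M → ℝ, CXfun φ e → ∃ N : ℕ, 0 < N ∧ ∃ (x : ℕ → M) (t : ℕ → ℝ),
    x 0 = p ∧ x N = p ∧ (∀ i ≤ N, x i ∈ Λ) ∧
    ∀ i < N, 1 ≤ t i ∧ dist (φ (t i) (x i)) (x (i + 1)) ≤ e (x i)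

/-!
Take `e ∈ C⁰_X(M)` bounded by `ε`, for instance the minimum of `ε` and the displacement of `z`
under the time-`1` and time-`√2` maps: it vanishes exactly at the singularities because a closed
group of periods containing `1` and `√2` is all of `ℝ`. Rescaled shadowing gives `d` for this `e`,
and R-chain recurrence a closed `d`-`1`-pseudo-orbit from `p` to `p`. Repeated periodically it
passes through `p` at times tending to infinity, so a point `y ∈ Λ` shadowing it is `ε`-close to `p`
and comes back `ε`-close to `p` at arbitrarily large times.
-/

namespace IsFlow

variable {φ : ℝ → M → M}

theorem continuous_apply (hφ : IsFlow φ) (t : ℝ) : Continuous (φ t) :=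
  hφ.1.comp (continuous_const.prodMk continuous_id)

theorem continuous_orbit (hφ : IsFlow φ) (z : M) : Continuous fun t => φ t z :=
  hφ.1.comp (continuous_id.prodMk continuous_const)

def periods (hφ : IsFlow φ) (z : M) : AddSubgroup ℝ where
  carrier := {t | φ t z = z}
  zero_mem' := hφ.2.1 z
  add_mem' {a b} ha hb := by
    change φ (a + b) z = z
    rw [hφ.2.2, hb, ha]
  neg_mem' {a} ha := by
    change φ (-a) z = z
    conv_lhs => rw [← ha, ← hφ.2.2, neg_add_cancel, hφ.2.1]

theorem isClosed_periods (hφ : IsFlow φ) (z : M) : IsClosed (hφ.periods z : Set ℝ) :=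
  isClosed_eq (hφ.continuous_orbit z) continuous_const

theorem isFixed_of_irrational_div {z : M} (hφ : IsFlow φ) {a b : ℝ} (hab : Irrational (a / b))
    (ha : φ a z = z) (hb : φ b z = z) : IsFixed φ z := by
  have hdense : Dense (hφ.periods z : Set ℝ) :=
    (dense_addSubgroupClosure_pair_iff.2 hab).mono <|
      SetLike.coe_subset_coe.2 <| (AddSubgroup.closure_le _).2 (pair_subset ha hb)
  intro t
  change t ∈ (hφ.periods z : Set ℝ)
  rw [← (hφ.isClosed_periods z).closure_eq, hdense.closure_eq]
  exact mem_univ t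

theorem exists_cxfun_le (hφ : IsFlow φ) {ε : ℝ} (hε : 0 < ε) :
    ∃ e : M → ℝ, CXfun φ e ∧ ∀ z, e z ≤ ε := by
  refine ⟨fun z => min ε (dist (φ (√2) z) z + dist (φ 1 z) z), ⟨?_, fun z => ⟨by positivity, ?_⟩⟩,
    fun z => min_le_left _ _⟩
  · exact continuous_const.min <| ((hφ.continuous_apply _).dist continuous_id).add
      ((hφ.continuous_apply _).dist continuous_id)
  constructor
  · intro hz
    have hdisp : dist (φ (√2) z) z + dist (φ 1 z) z = 0 := by
      by_contra hne
      exact (lt_min hε (lt_of_le_of_ne (by positivity) (Ne.symm hne))).ne' hz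
    rw [add_eq_zero_iff_of_nonneg dist_nonneg dist_nonneg, dist_eq_zero, dist_eq_zero] at hdisp
    exact hφ.isFixed_of_irrational_div (by simpa using irrational_sqrt_two) hdisp.1 hdisp.2
  · intro hz
    simp [hz 1, hz (√2), hε.le]

end IsFlow

section PeriodicExtension

variable {α : Type*} {N : ℕ}

def periodicExtension (N : ℕ) (x : ℕ → α) (i : ℤ) : α := x (i % N).toNat

theorem Int.toNat_emod_lt (hN : 0 < N) (i : ℤ) : (i % N).toNat < N := by
  have := Int.emod_lt_of_pos i (Int.natCast_pos.2 hN)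
  omega

theorem periodicExtension_add_one {x : ℕ → α} (hN : 0 < N) (hx : x N = x 0) (i : ℤ) :
    periodicExtension N x (i + 1) = x ((i % N).toNat + 1) := by
  have hnonneg := Int.emod_nonneg i (Int.natCast_pos.2 hN).ne'
  have hlt := Int.emod_lt_of_pos i (Int.natCast_pos.2 hN)
  unfold periodicExtension
  rw [← Int.emod_add_emod]
  rcases (show i % N + 1 < N ∨ i % N + 1 = N by omega) with hwrap | hwrap
  · rw [Int.emod_eq_of_lt (by omega) hwrap]
    congr 1
    omega
  · rw [hwrap, Int.emod_self, show (i % N).toNat + 1 = N by omega, hx]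
    rfl

theorem periodicExtension_natCast_mul (x : ℕ → α) (k : ℕ) :
    periodicExtension N x ((k * N : ℕ) : ℤ) = x 0 := by
  simp [periodicExtension]

theorem isRescaledPseudoOrbit_periodicExtension {φ : ℝ → M → M} {e : M → ℝ} {T : ℝ}
    {x : ℕ → M} {t : ℕ → ℝ} (hN : 0 < N) (hx : x N = x 0)
    (hstep : ∀ i < N, T ≤ t i ∧ dist (φ (t i) (x i)) (x (i + 1)) ≤ e (x i)) :
    IsRescaledPseudoOrbit φ e T (periodicExtension N x) (periodicExtension N t) := fun i => by
  rw [periodicExtension_add_one hN hx]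
  exact hstep _ (Int.toNat_emod_lt hN i)

end PeriodicExtension

section PartialSums

def partialSum (t : ℤ → ℝ) : ℤ → ℝ
  | Int.ofNat n => ∑ j ∈ Finset.range n, t j
  | Int.negSucc n => -∑ j ∈ Finset.range (n + 1), t (Int.negSucc j)

theorem partialSums_partialSum (t : ℤ → ℝ) : PartialSums t (partialSum t) := by
  refine ⟨by simp [partialSum], fun i => ?_⟩
  rcases i with n | _ | n
  · exact Finset.sum_range_succ _ n
  · simp [partialSum]
  · change -_ = -_ + _
    simp [Finset.sum_range_succ]

variable {t s : ℤ → ℝ}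

theorem PartialSums.lt_succ (hs : PartialSums t s) {i : ℤ} (hi : 0 < t i) : s i < s (i + 1) := by
  rw [hs.2 i]
  linarith

theorem PartialSums.natCast_le (hs : PartialSums t s) (ht : ∀ i, 1 ≤ t i) (n : ℕ) :
    (n : ℝ) ≤ s n := by
  induction n with
  | zero => simp [hs.1]
  | succ n ih =>
    rw [Nat.cast_succ, Nat.cast_succ, hs.2]
    linarith [ht n]

end PartialSums

theorem RescaledShadowsWith.dist_le_of_lt {φ : ℝ → M → M} {e : M → ℝ} {x : ℤ → M}
    {s : ℤ → ℝ} {y : M} {h : ℝ → ℝ} (hsh : RescaledShadowsWith φ e x s y h) (h0 : ∀ z, φ 0 z = z) {i : ℤ}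
    (hi : s i < s (i + 1)) : dist (φ (h (s i)) y) (x i) ≤ e (x i) := by
  simpa [h0] using hsh i (s i) ⟨le_rfl, hi⟩

theorem stmt_13_general {M : Type*} [MetricSpace M] (φ : ℝ → M → M)
    (hφ : IsFlow φ) (Λ : Set M)
    (hcr : RChainRecurrentSet φ Λ) (hshad : RescaledShadowingOn φ Λ) :
    ∀ p ∈ Λ, NonWanderingPt φ Λ p := by
  intro p hp ε hε T _
  obtain ⟨e, he, he_le⟩ := hφ.exists_cxfun_le hε
  obtain ⟨d, hd, hshad_d⟩ := hshad e he
  obtain ⟨N, hN, x, t, hx0, hxN, hxΛ, hstep⟩ := hcr p hp d hd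
  set s := partialSum (periodicExtension N t)
  have hs : PartialSums (periodicExtension N t) s := partialSums_partialSum _
  have ht : ∀ i, 1 ≤ periodicExtension N t i := fun i => (hstep _ (Int.toNat_emod_lt hN i)).1
  obtain ⟨y, hyΛ, h, ⟨h_mono, -, h_surj, h_zero⟩, hy⟩ :=
    hshad_d (periodicExtension N x) _ s (fun i => hxΛ _ (Int.toNat_emod_lt hN i).le)
      (isRescaledPseudoOrbit_periodicExtension hN (hxN.trans hx0.symm) hstep) hs
  have hreturn : ∀ k : ℕ, dist (φ (h (s (k * N : ℕ))) y) p ≤ ε := fun k => by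
    have := hy.dist_le_of_lt hφ.2.1 (i := (k * N : ℕ))
      (hs.lt_succ (zero_lt_one.trans_le (ht _)))
    rw [periodicExtension_natCast_mul, hx0] at this
    exact this.trans (he_le p)
  obtain ⟨u, hu⟩ := h_surj (T + 1)
  refine ⟨y, hyΛ, by simpa [hs.1, h_zero, hφ.2.1] using hreturn 0,
    h (s (⌈u⌉₊ * N : ℕ)), ?_, hreturn _⟩
  have hu_le : u ≤ s (⌈u⌉₊ * N : ℕ) := calc
    u ≤ ⌈u⌉₊ := Nat.le_ceil u
    _ ≤ (⌈u⌉₊ * N : ℕ) := by exact_mod_cast Nat.le_mul_of_pos_right _ hN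
    _ ≤ s (⌈u⌉₊ * N : ℕ) := hs.natCast_le ht _
  linarith [h_mono.monotone hu_le]

/-- Lemma 5.4: an R-chain-recurrent closed invariant set with the
rescaled-shadowing property is non-wandering. -/
theorem stmt_13 {M : Type*} [MetricSpace M] (φ : ℝ → M → M)
    (hφ : IsFlow φ) (Λ : Set M) (hclosed : IsClosed Λ) (hinv : Invariant φ Λ)
    (hcr : RChainRecurrentSet φ Λ) (hshad : RescaledShadowingOn φ Λ) :
    ∀ p ∈ Λ, NonWanderingPt φ Λ p :=
  stmt_13_general φ hφ Λ hcr hshad
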